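/- arXiv:2601.12450 — 2 statements merged into one kernel-verified Lean document; each statement's English description precedes it below -/
import Mathlib

section
/- For any centers (x, y), (x', y') ∈ ℝ² and radii r, r' > 0, the supremum over t ∈ [0, 2π] of the Euclidean distance between the points (r·cos t + x, r·sin t + y) and (r'·cos t + x', r'·sin t + y') equals |r' - r| + sqrt((x' - x)² + (y' - y)²). -/
/-!
The vector from the first point to the second is `w + (r' - r) e^{it}` with
`w = (x' - x) + (y' - y) i`, i.e. it traces the circle of radius `|r' - r|` about `w`. By the
triangle inequality its norm is at most `‖w‖ + |r' - r|`, with equality when `e^{it}` points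
along `w` (or against it, if `r' < r`); such `t` exist in every period.
-/

open Complex Set
open scoped Real

theorem norm_circleMap_le (c : ℂ) (R θ : ℝ) : ‖circleMap c R θ‖ ≤ ‖c‖ + |R| := by
  rw [← norm_circleMap_zero R θ, circleMap_zero]
  exact norm_add_le _ _

theorem exists_norm_circleMap_eq (c : ℂ) (R : ℝ) : ∃ θ, ‖circleMap c R θ‖ = ‖c‖ + |R| := by
  have hc : c = ‖c‖ * exp (arg c * I) := (norm_mul_exp_arg_mul_I c).symm
  rcases le_or_gt 0 R with hR | hR
  · refine ⟨arg c, ?_⟩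
    have hmap : circleMap c R (arg c) = ((‖c‖ + R : ℝ) : ℂ) * exp (arg c * I) := by
      rw [circleMap, ofReal_add, add_mul, ← hc]
    rw [hmap, norm_mul, norm_exp_ofReal_mul_I, mul_one, norm_real, Real.norm_eq_abs,
      abs_of_nonneg (by positivity), abs_of_nonneg hR]
  · refine ⟨arg c + π, ?_⟩
    have hmap : circleMap c R (arg c + π) = ((‖c‖ - R : ℝ) : ℂ) * exp (arg c * I) := by
      rw [circleMap, ofReal_add, add_mul, exp_add, exp_pi_mul_I, ofReal_sub, sub_mul, ← hc]
      ring
    rw [hmap, norm_mul, norm_exp_ofReal_mul_I, mul_one, norm_real, Real.norm_eq_abs,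
      abs_of_nonneg (by linarith [norm_nonneg c]), abs_of_neg hR, sub_eq_add_neg]

theorem isGreatest_norm_circleMap_image_Icc (c : ℂ) (R a : ℝ) :
    IsGreatest ((fun θ => ‖circleMap c R θ‖) '' Icc a (a + 2 * π)) (‖c‖ + |R|) := by
  have hperiodic : Function.Periodic (fun θ => ‖circleMap c R θ‖) (2 * π) :=
    (periodic_circleMap c R).comp _
  rw [hperiodic.image_Icc Real.two_pi_pos a]
  obtain ⟨θ, hθ⟩ := exists_norm_circleMap_eq c R
  exact ⟨⟨θ, hθ⟩, forall_mem_range.2 (norm_circleMap_le c R)⟩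

theorem stmt1_general (x y x' y' r r' : ℝ) :
    sSup ((fun t : ℝ =>
        dist (((r * Real.cos t + x : ℝ) : ℂ) + ((r * Real.sin t + y : ℝ) : ℂ) * Complex.I)
             (((r' * Real.cos t + x' : ℝ) : ℂ) + ((r' * Real.sin t + y' : ℝ) : ℂ) * Complex.I))
      '' Set.Icc 0 (2 * Real.pi)) =
      |r' - r| + Real.sqrt ((x' - x) ^ 2 + (y' - y) ^ 2) := by
  set w : ℂ := (x' - x : ℝ) + (y' - y : ℝ) * I
  have hw : ‖w‖ = √((x' - x) ^ 2 + (y' - y) ^ 2) := by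
    rw [norm_def, normSq_add_mul_I]
  have hdist : ∀ t : ℝ,
      dist (((r * Real.cos t + x : ℝ) : ℂ) + ((r * Real.sin t + y : ℝ) : ℂ) * I)
           (((r' * Real.cos t + x' : ℝ) : ℂ) + ((r' * Real.sin t + y' : ℝ) : ℂ) * I)
        = ‖circleMap w (r' - r) t‖ := by
    intro t
    rw [dist_comm, dist_eq, circleMap, exp_mul_I, ← ofReal_cos, ← ofReal_sin]
    congr 1
    push_cast [w]
    ring
  simp_rw [hdist]
  have hmax := isGreatest_norm_circleMap_image_Icc w (r' - r) 0
  rw [zero_add] at hmax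
  rw [hmax.csSup_eq, hw, add_comm]

/-- The sup over `t ∈ [0, 2π]` of the distance between corresponding points
`(r cos t + x, r sin t + y)` and `(r' cos t + x', r' sin t + y')` on two circles
equals `|r' - r| + √((x'-x)² + (y'-y)²)`. -/
theorem stmt1 (x y x' y' r r' : ℝ) (hr : 0 < r) (hr' : 0 < r') :
    sSup ((fun t : ℝ =>
        dist (((r * Real.cos t + x : ℝ) : ℂ) + ((r * Real.sin t + y : ℝ) : ℂ) * Complex.I)
             (((r' * Real.cos t + x' : ℝ) : ℂ) + ((r' * Real.sin t + y' : ℝ) : ℂ) * Complex.I))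
      '' Set.Icc 0 (2 * Real.pi)) =
      |r' - r| + Real.sqrt ((x' - x) ^ 2 + (y' - y) ^ 2) :=
  stmt1_general x y x' y' r r'
end

section
/- For a continuous path in the space of pairs of disjoint embedded circles in the plane, nesting is preserved: let f, g : [0,1] × S¹ → ℝ² be continuous, with f(t, ·) and g(t, ·) injective and f(t, S¹) ∩ g(t, S¹) = ∅ for every t. If g(0, S¹) is contained in the bounded complementary component of f(0, S¹), then g(1, S¹) is contained in the bounded complementary component of f(1, S¹). -/
/-!
For a compact `K ⊆ ℂ` and `z ∉ K`, the point `z` lies in a bounded component of `Kᶜ` iff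
`w ↦ w - z` has no continuous logarithm on `K` (Borsuk's separation criterion). By homotopy
lifting for the covering `exp : ℂ → ℂ \ {0}`, having a continuous logarithm is invariant under
homotopies through nonvanishing maps, and `t ↦ (x ↦ f(t, x) - g(t, 1))` is such a homotopy.
Hence `g(1, 1)` lies in a bounded component of the complement of `f(1, S¹)`, and so does the
connected set `g(1, S¹)`, which misses `f(1, S¹)`.
-/

open Set Bornology unitInterval

def HasContinuousLog {X : Type*} [TopologicalSpace X] (u : X → ℂ) : Prop :=
  ∃ L : X → ℂ, Continuous L ∧ ∀ x, Complex.exp (L x) = u x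

namespace HasContinuousLog

variable {X Y : Type*} [TopologicalSpace X] [TopologicalSpace Y]

theorem comp {u : Y → ℂ} (hu : HasContinuousLog u) {g : X → Y} (hg : Continuous g) :
    HasContinuousLog (u ∘ g) :=
  let ⟨L, hL, hexp⟩ := hu
  ⟨L ∘ g, hL.comp hg, fun x => hexp (g x)⟩

theorem const {c : ℂ} (hc : c ≠ 0) : HasContinuousLog fun _ : X => c :=
  ⟨fun _ => Complex.log c, continuous_const, fun _ => Complex.exp_log hc⟩

theorem of_homotopy {H : I × X → ℂ} (hH : Continuous H) (hne : ∀ q, H q ≠ 0)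
    (h₀ : HasContinuousLog fun x => H (0, x)) : HasContinuousLog fun x => H (1, x) := by
  obtain ⟨L, hL, hexp⟩ := h₀
  let H' : C(I × X, {w : ℂ // w ≠ 0}) := ⟨fun q => ⟨H q, hne q⟩, hH.subtype_mk _⟩
  have hH'₀ (x : X) : H' (0, x) = ⟨Complex.exp (L x), Complex.exp_ne_zero _⟩ :=
    Subtype.ext (hexp x).symm
  let Λ := Complex.isCoveringMap_exp.liftHomotopy H' ⟨L, hL⟩ hH'₀
  refine ⟨fun x => Λ (1, x), Λ.continuous.comp (.prodMk_right 1), fun x => ?_⟩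
  exact congrArg Subtype.val
    (congr_fun (Complex.isCoveringMap_exp.liftHomotopy_lifts _ _ hH'₀) (1, x))

theorem iff_of_homotopy {H : I × X → ℂ} (hH : Continuous H) (hne : ∀ q, H q ≠ 0) :
    (HasContinuousLog fun x => H (0, x)) ↔ HasContinuousLog fun x => H (1, x) := by
  refine ⟨of_homotopy hH hne, fun h₁ => ?_⟩
  have hsymm : Continuous fun q : I × X => H (σ q.1, q.2) := by fun_prop
  simpa using of_homotopy hsymm (fun q => hne _) (by simpa using h₁)

end HasContinuousLog

theorem hasContinuousLog_of_continuous_of_ne_zero {E : Type*} [NormedAddCommGroup E]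
    [NormedSpace ℝ E] {u : E → ℂ} (hu : Continuous u) (hne : ∀ w, u w ≠ 0) :
    HasContinuousLog u := by
  have H : Continuous fun q : I × E => u ((q.1 : ℝ) • q.2) := by fun_prop
  simpa using HasContinuousLog.of_homotopy H (fun q => hne _) (by simpa using .const (hne 0))

theorem not_hasContinuousLog_mul_circle (R : ℂ) :
    ¬ HasContinuousLog fun x : Circle => R * x := by
  rintro ⟨L, hL, hexp⟩
  -- both sides lift `t ↦ R * exp (t * I)` through `exp` and agree at `0`; compare them at `2π`
  have hlift : (fun t : ℝ => L (Circle.exp t)) = fun t : ℝ => t * Complex.I + L 1 := by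
    refine Complex.isCoveringMap_exp.eq_of_comp_eq (hL.comp Circle.exp.continuous) (by fun_prop)
      (funext fun t => Subtype.ext ?_) 0 (by simp)
    simp [hexp, Complex.exp_add, Circle.coe_exp, mul_comm]
  have h2π := congr_fun hlift (2 * Real.pi)
  simp [Circle.exp_two_pi] at h2π

theorem norm_unitInterval_mul_le (s : I) (v : ℂ) : ‖((s : ℝ) : ℂ) * v‖ ≤ ‖v‖ := by
  rw [norm_mul, Complex.norm_real, Real.norm_of_nonneg (nonneg s)]
  exact mul_le_of_le_one_left (norm_nonneg v) (le_one s)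

theorem frontier_connectedComponentIn_compl_subset {α : Type*} [TopologicalSpace α]
    [LocallyConnectedSpace α] {K : Set α} (hK : IsClosed K) (z : α) :
    frontier (connectedComponentIn Kᶜ z) ⊆ K := by
  intro w hw
  by_contra hwK
  have hwD : w ∈ connectedComponentIn Kᶜ w := mem_connectedComponentIn hwK
  obtain ⟨y, hyD, hyC⟩ := mem_closure_iff.mp hw.1 _
    (hK.isOpen_compl.connectedComponentIn) hwD
  rw [connectedComponentIn_eq hyD, ← connectedComponentIn_eq hyC] at hwD
  exact hw.2 (hK.isOpen_compl.connectedComponentIn.interior_eq.symm ▸ hwD)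

theorem hasContinuousLog_sub_of_not_isBounded {K : Set ℂ} (hK : IsCompact K) {z : ℂ}
    (hub : ¬ IsBounded (connectedComponentIn Kᶜ z)) :
    HasContinuousLog fun w : K => (w : ℂ) - z := by
  have hz : z ∈ Kᶜ := fun hzK =>
    hub (by simp [connectedComponentIn_eq_empty fun h : z ∈ Kᶜ => h hzK])
  obtain ⟨r, hr, hKr⟩ := hK.isBounded.subset_closedBall_lt 0 0
  obtain ⟨w, hwU, hrw⟩ : ∃ w ∈ connectedComponentIn Kᶜ z, r < ‖w‖ := by
    by_contra! h
    exact hub ((Metric.isBounded_closedBall (x := 0) (r := r)).subset fun v hv => by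
      simpa using h v hv)
  have hU : IsPathConnected (connectedComponentIn Kᶜ z) :=
    hK.isClosed.isOpen_compl.connectedComponentIn.isConnected_iff_isPathConnected.mp
      (isConnected_connectedComponentIn_iff.mpr hz)
  have hzw := hU.joinedIn z (mem_connectedComponentIn hz) w hwU
  let γ := hzw.somePath
  have hslide := HasContinuousLog.iff_of_homotopy (H := fun q : I × K => (q.2 : ℂ) - γ q.1)
    (by fun_prop) fun q h => connectedComponentIn_subset _ _ (hzw.somePath_mem q.1)
      (sub_eq_zero.mp h ▸ q.2.2)
  have hnorm (q : I × K) : ‖(q.1 : ℝ) * (q.2 : ℂ)‖ < ‖w‖ :=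
    (norm_unitInterval_mul_le q.1 q.2).trans_lt
      ((mem_closedBall_zero_iff.mp (hKr q.2.2)).trans_lt hrw)
  have hshrink := HasContinuousLog.of_homotopy (H := fun q : I × K => (q.1 : ℝ) * (q.2 : ℂ) - w)
    (by fun_prop) (fun q h => (hnorm q).ne (by rw [sub_eq_zero.mp h]))
    (by simpa using HasContinuousLog.const (neg_ne_zero.mpr (norm_pos_iff.mp (hr.trans hrw))))
  simpa [γ] using hslide.mpr (by simpa using hshrink)

theorem not_hasContinuousLog_sub_of_isBounded {K : Set ℂ} (hK : IsClosed K) {z : ℂ}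
    (hb : IsBounded (connectedComponentIn Kᶜ z)) :
    ¬ HasContinuousLog fun w : K => (w : ℂ) - z := by
  -- Extend the logarithm from `K` by Tietze and glue its exponential with `w - z` outside the
  -- component: on a circle enclosing the component, `w - z` would then have a logarithm.
  rintro ⟨L, hL, hexp⟩
  by_cases hzK : z ∈ K
  · exact Complex.exp_ne_zero (L ⟨z, hzK⟩) (by simpa using hexp ⟨z, hzK⟩)
  have hz : z ∈ Kᶜ := hzK
  obtain ⟨L', hL'⟩ := ContinuousMap.exists_restrict_eq hK ⟨L, hL⟩
  have hL'K (w : ℂ) (hw : w ∈ K) : Complex.exp (L' w) = w - z := by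
    simpa [← hexp ⟨w, hw⟩] using congrArg Complex.exp (DFunLike.congr_fun hL' ⟨w, hw⟩)
  classical
  let G := (connectedComponentIn Kᶜ z).piecewise (fun w => Complex.exp (L' w)) (· - z)
  have hG : Continuous G := Continuous.piecewise
    (fun w hw => hL'K w (frontier_connectedComponentIn_compl_subset hK z hw))
    (by fun_prop) (by fun_prop)
  have hGne (w : ℂ) : G w ≠ 0 := by
    by_cases hw : w ∈ connectedComponentIn Kᶜ z
    · simp [G, hw, Complex.exp_ne_zero]
    · intro hGw
      simp only [G, piecewise_eq_of_notMem _ _ _ hw, sub_eq_zero] at hGw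
      subst hGw
      exact hw (mem_connectedComponentIn hz)
  obtain ⟨R, hR, hCR⟩ := hb.subset_ball_lt 0 0
  have hzR : ‖z‖ < R := by simpa using hCR (mem_connectedComponentIn hz)
  have hcircle : HasContinuousLog fun x : Circle => (R : ℂ) * x - z := by
    convert (hasContinuousLog_of_continuous_of_ne_zero hG hGne).comp
      (by fun_prop : Continuous fun x : Circle => (R : ℂ) * x) using 1
    funext x
    have hx : (R : ℂ) * x ∉ connectedComponentIn Kᶜ z := fun h => by
      simpa [abs_of_pos hR, Circle.norm_coe] using hCR h
    simp [G, piecewise_eq_of_notMem _ _ _ hx]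
  have hne (q : I × Circle) : (R : ℂ) * q.2 - (q.1 : ℝ) * z ≠ 0 := by
    refine sub_ne_zero.mpr fun h => (norm_unitInterval_mul_le q.1 z).not_gt ?_
    simpa [← h, Circle.norm_coe, abs_of_pos hR] using hzR
  refine not_hasContinuousLog_mul_circle R ?_
  simpa using (HasContinuousLog.iff_of_homotopy (by fun_prop) hne).mpr (by simpa using hcircle)

theorem hasContinuousLog_sub_iff_not_isBounded {K : Set ℂ} (hK : IsCompact K) (z : ℂ) :
    HasContinuousLog (fun w : K => (w : ℂ) - z) ↔ ¬ IsBounded (connectedComponentIn Kᶜ z) :=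
  ⟨fun h hb => not_hasContinuousLog_sub_of_isBounded hK.isClosed hb h,
    hasContinuousLog_sub_of_not_isBounded hK⟩

theorem hasContinuousLog_sub_iff_of_injective {X : Type*} [TopologicalSpace X] [CompactSpace X]
    {φ : X → ℂ} (hφ : Continuous φ) (hinj : Function.Injective φ) (z : ℂ) :
    HasContinuousLog (fun x => φ x - z) ↔ ¬ IsBounded (connectedComponentIn (range φ)ᶜ z) := by
  let e := (hφ.isClosedEmbedding hinj).isEmbedding.toHomeomorph
  rw [← hasContinuousLog_sub_iff_not_isBounded (isCompact_range hφ)]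
  have he (w : range φ) : φ (e.symm w) = w := congrArg Subtype.val (e.apply_symm_apply w)
  refine ⟨fun h => ?_, fun h => ?_⟩
  · simpa [Function.comp_def, he] using h.comp e.symm.continuous
  · simpa [Function.comp_def, e] using h.comp e.continuous

theorem isBounded_connectedComponentIn_iff_of_homotopy {X : Type*} [TopologicalSpace X]
    [CompactSpace X] {φ : I → X → ℂ} (hφ : Continuous fun q : I × X => φ q.1 q.2)
    (hinj : ∀ s, Function.Injective (φ s)) {z : I → ℂ} (hz : Continuous z)
    (hne : ∀ s x, φ s x ≠ z s) :
    IsBounded (connectedComponentIn (range (φ 0))ᶜ (z 0)) ↔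
      IsBounded (connectedComponentIn (range (φ 1))ᶜ (z 1)) := by
  have hslice (s : I) : Continuous (φ s) := hφ.comp (.prodMk_right s)
  have hlog := HasContinuousLog.iff_of_homotopy (H := fun q : I × X => φ q.1 q.2 - z q.1)
    (hφ.sub (hz.comp continuous_fst)) fun q => sub_ne_zero.mpr (hne q.1 q.2)
  dsimp only at hlog
  rw [hasContinuousLog_sub_iff_of_injective (hslice 0) (hinj 0),
    hasContinuousLog_sub_iff_of_injective (hslice 1) (hinj 1)] at hlog
  exact not_iff_not.mp hlog

theorem stmt18_general (f g : ℝ → Circle → ℂ)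
    (hf : ContinuousOn (fun p : ℝ × Circle => f p.1 p.2) (Icc 0 1 ×ˢ univ))
    (hg : ContinuousOn (fun p : ℝ × Circle => g p.1 p.2) (Icc 0 1 ×ˢ univ))
    (hfinj : ∀ t ∈ Icc (0 : ℝ) 1, Function.Injective (f t))
    (hdisj : ∀ t ∈ Icc (0 : ℝ) 1, Disjoint (range (f t)) (range (g t)))
    (h0 : ∃ x ∈ (range (f 0))ᶜ, Bornology.IsBounded (connectedComponentIn (range (f 0))ᶜ x) ∧
      range (g 0) ⊆ connectedComponentIn (range (f 0))ᶜ x) :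
    ∃ x ∈ (range (f 1))ᶜ, Bornology.IsBounded (connectedComponentIn (range (f 1))ᶜ x) ∧
      range (g 1) ⊆ connectedComponentIn (range (f 1))ᶜ x := by
  obtain ⟨x, -, hxb, hg₀⟩ := h0
  have hI {F : ℝ → Circle → ℂ}
      (hF : ContinuousOn (fun p : ℝ × Circle => F p.1 p.2) (Icc 0 1 ×ˢ univ)) :
      Continuous fun q : I × Circle => F q.1 q.2 :=
    hF.comp_continuous (f := fun q : I × Circle => ((q.1 : ℝ), q.2)) (by fun_prop)
      fun q => ⟨q.1.2, trivial⟩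
  have hne (s : I) (y : Circle) : f s y ≠ g s 1 := fun h =>
    disjoint_left.mp (hdisj s s.2) ⟨y, h⟩ (mem_range_self 1)
  have hb₁ : IsBounded (connectedComponentIn (range (f 1))ᶜ (g 1 1)) := by
    have hb₀ := connectedComponentIn_eq (hg₀ (mem_range_self 1)) ▸ hxb
    simpa using (isBounded_connectedComponentIn_iff_of_homotopy (φ := fun s => f s) (hI hf)
      (fun s => hfinj s s.2) (z := fun s => g s 1) ((hI hg).comp (.prodMk_left 1)) hne).mp
      (by simpa using hb₀)
  refine ⟨g 1 1, fun ⟨y, hy⟩ => hne 1 y (by simpa using hy), hb₁, ?_⟩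
  exact (isPreconnected_range ((hI hg).comp (.prodMk_right 1))).subset_connectedComponentIn
    (by simp) (hdisj 1 one_mem).symm.subset_compl_right

/-- Nesting is preserved along a continuous path of pairs of disjoint embedded circles:
if `f, g : [0,1] × S¹ → ℝ²` are continuous, each `f(t,·)`, `g(t,·)` is injective, the
two images are disjoint for every `t`, and `g(0, S¹)` lies in the bounded complementary
component of `f(0, S¹)`, then `g(1, S¹)` lies in the bounded complementary component of
`f(1, S¹)`. -/
theorem stmt18 (f g : ℝ → Circle → ℂ)
    (hf : ContinuousOn (fun p : ℝ × Circle => f p.1 p.2) (Icc 0 1 ×ˢ univ))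
    (hg : ContinuousOn (fun p : ℝ × Circle => g p.1 p.2) (Icc 0 1 ×ˢ univ))
    (hfinj : ∀ t ∈ Icc (0 : ℝ) 1, Function.Injective (f t))
    (hginj : ∀ t ∈ Icc (0 : ℝ) 1, Function.Injective (g t))
    (hdisj : ∀ t ∈ Icc (0 : ℝ) 1, Disjoint (range (f t)) (range (g t)))
    (h0 : ∃ x ∈ (range (f 0))ᶜ, Bornology.IsBounded (connectedComponentIn (range (f 0))ᶜ x) ∧
      range (g 0) ⊆ connectedComponentIn (range (f 0))ᶜ x) :
    ∃ x ∈ (range (f 1))ᶜ, Bornology.IsBounded (connectedComponentIn (range (f 1))ᶜ x) ∧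
      range (g 1) ⊆ connectedComponentIn (range (f 1))ᶜ x :=
  stmt18_general f g hf hg hfinj hdisj h0
end
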